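/- Let 𝔉 be a Fraïssé class, let k be an integral domain, let μ be a measure for 𝔉 valued in k, and let 𝔉' be the subclass of 𝔉 consisting of those X ∈ 𝔉 with μ(X) ≠ 0. Then: (1) 𝔉' is a Fraïssé class; (2) the restriction of μ to embeddings between members of 𝔉' is a measure for 𝔉' (with amalgamations taken in 𝔉') all of whose values are nonzero; and (3) if k is a field, this restriction is a regular measure for 𝔉'. -/

import Mathlib

/-! # Relational structures, embeddings, amalgamations, Fraïssé classes -/

namespace Paper

/-- A relational signature: a set `I` of relation symbols with arities `≥ 1`. -/
structure Signature : Type 1 where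
  I : Type
  arity : I → ℕ
  arity_pos : ∀ i, 1 ≤ arity i

variable {σ : Signature}

/-- A (finite relational) structure for the signature `σ`. -/
structure Struc (σ : Signature) : Type 1 where
  carrier : Type
  [fin : Finite carrier]
  rel : ∀ i : σ.I, (Fin (σ.arity i) → carrier) → Prop

attribute [instance] Struc.fin

/-- An embedding of structures: an injection under which the relations on the source are
exactly the restrictions of the relations on the target. -/
structure Emb (X Y : Struc σ) : Type where
  toFun : X.carrier → Y.carrier
  inj : Function.Injective toFun
  rel_iff : ∀ (i : σ.I) (v : Fin (σ.arity i) → X.carrier),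
    Y.rel i (fun j => toFun (v j)) ↔ X.rel i v

/-- The identity embedding. -/
def Emb.id (X : Struc σ) : Emb X X where
  toFun := fun x => x
  inj := fun _ _ h => h
  rel_iff := fun _ _ => Iff.rfl

/-- Composition of embeddings. -/
def Emb.comp {X Y Z : Struc σ} (g : Emb Y Z) (f : Emb X Y) : Emb X Z where
  toFun := fun x => g.toFun (f.toFun x)
  inj := fun _ _ h => f.inj (g.inj h)
  rel_iff := fun i v => (g.rel_iff i fun j => f.toFun (v j)).trans (f.rel_iff i v)

/-- An embedding is an isomorphism if it is surjective. -/
def Emb.IsIso {X Y : Struc σ} (f : Emb X Y) : Prop := Function.Surjective f.toFun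

/-- Two structures are isomorphic. -/
def StrucIso (X Y : Struc σ) : Prop := ∃ f : Emb X Y, f.IsIso

theorem strucIso_refl (X : Struc σ) : StrucIso X X := ⟨Emb.id X, fun y => ⟨y, rfl⟩⟩

/-- The induced structure on a subset of the carrier. -/
def Struc.restrict (X : Struc σ) (S : Set X.carrier) : Struc σ where
  carrier := S
  rel := fun i v => X.rel i (fun j => (v j : X.carrier))

/-- The inclusion embedding of an induced substructure into the whole structure. -/
def Struc.subEmb (X : Struc σ) (S : Set X.carrier) : Emb (X.restrict S) X where
  toFun := fun a => a.1
  inj := fun _ _ h => Subtype.ext h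
  rel_iff := fun _ _ => Iff.rfl

/-- The inclusion embedding between induced substructures on nested subsets. -/
def Struc.inclEmb (X : Struc σ) {S T : Set X.carrier} (h : S ⊆ T) :
    Emb (X.restrict S) (X.restrict T) where
  toFun := fun a => ⟨a.1, h a.2⟩
  inj := fun a b hab => Subtype.ext (Subtype.mk_eq_mk.mp (by exact hab))
  rel_iff := fun _ _ => Iff.rfl

/-- An amalgamation of `Y₁` and `Y₂` over `X` (along `i₁`, `i₂`). -/
structure Amalg {X Y₁ Y₂ : Struc σ} (i₁ : Emb X Y₁) (i₂ : Emb X Y₂) : Type 1 where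
  Z : Struc σ
  j₁ : Emb Y₁ Z
  j₂ : Emb Y₂ Z
  comm : ∀ x, j₁.toFun (i₁.toFun x) = j₂.toFun (i₂.toFun x)
  surj : ∀ z, z ∈ Set.range j₁.toFun ∪ Set.range j₂.toFun

/-- Isomorphism of amalgamations: a structure isomorphism commuting with the two
embeddings. -/
def Amalg.Iso {X Y₁ Y₂ : Struc σ} {i₁ : Emb X Y₁} {i₂ : Emb X Y₂}
    (A B : Amalg i₁ i₂) : Prop :=
  ∃ f : Emb A.Z B.Z, f.IsIso ∧ (∀ y, f.toFun (A.j₁.toFun y) = B.j₁.toFun y) ∧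
    (∀ y, f.toFun (A.j₂.toFun y) = B.j₂.toFun y)

/-- A structure lies in the class `F` up to isomorphism. -/
def MemUpIso (F : Set (Struc σ)) (X : Struc σ) : Prop := ∃ W ∈ F, StrucIso X W

theorem memUpIso_of_mem {F : Set (Struc σ)} {X : Struc σ} (h : X ∈ F) : MemUpIso F X :=
  ⟨X, h, strucIso_refl X⟩

/-- A Fraïssé class. -/
structure IsFraisse (F : Set (Struc σ)) : Prop where
  nonempty : F.Nonempty
  finClasses : ∀ n : ℕ, ∃ (m : ℕ) (r : Fin m → Struc σ),
    ∀ X ∈ F, Nat.card X.carrier = n → ∃ α, StrucIso X (r α)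
  hereditary : ∀ X ∈ F, ∀ Y : Struc σ, Nonempty (Emb Y X) → MemUpIso F Y
  amalg : ∀ (X Y₁ Y₂ : Struc σ), X ∈ F → Y₁ ∈ F → Y₂ ∈ F →
    ∀ (i₁ : Emb X Y₁) (i₂ : Emb X Y₂), ∃ A : Amalg i₁ i₂, MemUpIso F A.Z

theorem pair_compl_subset_left {α : Type*} (a b : α) : ({a, b} : Set α)ᶜ ⊆ ({a} : Set α)ᶜ :=
  Set.compl_subset_compl.mpr (fun _ hx => Set.mem_insert_iff.mpr (Or.inl hx))

theorem pair_compl_subset_right {α : Type*} (a b : α) : ({a, b} : Set α)ᶜ ⊆ ({b} : Set α)ᶜ :=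
  Set.compl_subset_compl.mpr (fun _ hx => Set.mem_insert_iff.mpr (Or.inr hx))

/-- The canonical amalgamation of `X∖{a}` and `X∖{b}` over `X∖{a,b}`, namely `X` itself. -/
def canonAmalg (X : Struc σ) (a b : X.carrier) (hab : a ≠ b) :
    Amalg (X.inclEmb (pair_compl_subset_left a b)) (X.inclEmb (pair_compl_subset_right a b)) where
  Z := X
  j₁ := X.subEmb ({a} : Set X.carrier)ᶜ
  j₂ := X.subEmb ({b} : Set X.carrier)ᶜ
  comm := fun _ => rfl
  surj := fun z => by
    by_cases hz : z = a
    · exact Or.inr ⟨⟨z, by simp only [Set.mem_compl_iff, Set.mem_singleton_iff, hz]; exact hab⟩, rfl⟩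
    · exact Or.inl ⟨⟨z, by simp [hz]⟩, rfl⟩

/-- Two distinct elements `a b` of `X` are separated (relative to the class `F`) if `X` is,
up to isomorphism of amalgamations, the unique amalgamation of `X∖{a}` and `X∖{b}` over
`X∖{a,b}` lying in `F`. -/
def Separated (F : Set (Struc σ)) (X : Struc σ) (a b : X.carrier) (hab : a ≠ b) : Prop :=
  ∀ A : Amalg (X.inclEmb (pair_compl_subset_left a b)) (X.inclEmb (pair_compl_subset_right a b)),
    MemUpIso F A.Z → A.Iso (canonAmalg X a b hab)

/-- Stably separated: every embedding into a member of `F` sends `a`, `b` to separated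
elements. -/
def StablySeparated (F : Set (Struc σ)) (X : Struc σ) (a b : X.carrier) (hab : a ≠ b) : Prop :=
  ∀ X' : Struc σ, MemUpIso F X' → ∀ f : Emb X X',
    Separated F X' (f.toFun a) (f.toFun b) (fun h => hab (f.inj h))

/-- Isomorphism of marked structures. -/
def MarkedIso (X : Struc σ) (a : X.carrier) (Y : Struc σ) (b : Y.carrier) : Prop :=
  ∃ f : Emb X Y, f.IsIso ∧ f.toFun a = b

/-- `b` is extraneous in the marked structure `(X, a)` if it is separated from `a`. -/
def Extraneous (F : Set (Struc σ)) (X : Struc σ) (a b : X.carrier) : Prop :=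
  ∃ h : a ≠ b, Separated F X a b h

/-- A marked structure is minimal if it has no extraneous elements. -/
def MinimalMarked (F : Set (Struc σ)) (X : Struc σ) (a : X.carrier) : Prop :=
  ∀ b : X.carrier, ¬ Extraneous F X a b

/-- `f : W → X` is a one-point extension missing exactly `a`. -/
def IsOnePointExt {W X : Struc σ} (f : Emb W X) (a : X.carrier) : Prop :=
  Set.range f.toFun = ({a} : Set X.carrier)ᶜ

end Paper

/-! # Measures on Fraïssé classes and the induced regular measure -/

namespace Paper

variable {σ : Signature}

/-- `μ` is a measure for the class `F` valued in the commutative ring `k`: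
(a) isomorphisms get value `1`; (b) multiplicativity under composition; (c) the
amalgamation identity `μ(i) = Σ_α μ(i'_α)`, where `i'_α` runs over a complete irredundant
system of representatives of the isomorphism classes of amalgamations lying in `F`. -/
def IsMeasure (F : Set (Struc σ)) {k : Type} [CommRing k]
    (μ : ∀ X Y : Struc σ, Emb X Y → k) : Prop :=
  (∀ (X Y : Struc σ), X ∈ F → Y ∈ F → ∀ f : Emb X Y, f.IsIso → μ X Y f = 1) ∧
  (∀ (X Y Z : Struc σ), X ∈ F → Y ∈ F → Z ∈ F →
    ∀ (f : Emb X Y) (g : Emb Y Z), μ X Z (g.comp f) = μ Y Z g * μ X Y f) ∧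
  (∀ (X Y X' : Struc σ), X ∈ F → Y ∈ F → X' ∈ F →
    ∀ (i : Emb X Y) (f : Emb X X') (m : ℕ) (r : Fin m → Amalg i f),
      (∀ α, (r α).Z ∈ F) →
      (∀ A : Amalg i f, MemUpIso F A.Z → ∃ α, A.Iso (r α)) →
      (∀ α β, (r α).Iso (r β) → α = β) →
      μ X Y i = ∑ α, μ X' (r α).Z (r α).j₂)

/-- The subclass `𝔉'` of `𝔉` consisting of the structures of nonzero measure (`μ(X)`
being the value of `μ` on an embedding into `X` of an empty structure in `𝔉`). -/
def PosClass (F : Set (Struc σ)) {k : Type} [CommRing k]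
    (μ : ∀ X Y : Struc σ, Emb X Y → k) : Set (Struc σ) :=
  {X | X ∈ F ∧ ∀ W : Struc σ, W ∈ F → IsEmpty W.carrier →
    ∀ e : Emb W X, μ W X e ≠ 0}

/-! Fix an empty structure `∅ ∈ 𝔉`. Multiplicativity gives `μ(∅ → Y) = μ(g) · μ(∅ → X)` for every
embedding `g : X → Y` in `𝔉`. Hence `μ(g) ≠ 0` when `Y ∈ 𝔉'`, `𝔉'` is closed under substructures,
and, `k` being a domain, an extension `Z ∈ 𝔉` of some `Y ∈ 𝔉'` lies in `𝔉'` exactly when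
`μ(Y → Z) ≠ 0`. So in the amalgamation identity for `𝔉` the amalgams outside `𝔉'` contribute
nothing: this is the identity for `𝔉'`, and since its left side is nonzero some amalgam lies
in `𝔉'`. -/

theorem _root_.Set.Finite.exists_fin_transversal {A : Type*} [Setoid A] {C : Set A}
    (hC : C.Finite) :
    ∃ (m : ℕ) (r : Fin m → A), (∀ α, r α ∈ C) ∧ (∀ a ∈ C, ∃ α, a ≈ r α) ∧
      ∀ α β, r α ≈ r β → α = β := by
  let e := (hC.image (Quotient.mk ‹_›)).equivFin
  choose rep hrepC hrep using fun q : Quotient.mk ‹_› '' C => (Set.mem_image _ _ _).mp q.2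
  refine ⟨_, fun α => rep (e.symm α), fun α => hrepC _,
    fun a ha => ⟨e ⟨_, a, ha, rfl⟩, Quotient.exact ?_⟩, fun α β h => ?_⟩
  · rw [hrep, e.symm_apply_apply]
  · apply e.symm.injective
    apply Subtype.ext
    rw [← hrep, ← hrep]
    exact Quotient.sound h

theorem _root_.Fintype.sum_eq_sum_of_transversals {A M ι κ : Type*} [Setoid A]
    [AddCommMonoid M] [Fintype ι] [Fintype κ] (g : A → M) {r : ι → A} {s : κ → A}
    (hr : ∀ α β, r α ≈ r β → α = β) (hs : ∀ α β, s α ≈ s β → α = β)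
    (hrs : ∀ α, ∃ β, r α ≈ s β) (hsr : ∀ β, g (s β) ≠ 0 → ∃ α, s β ≈ r α)
    (hg : ∀ α β, r α ≈ s β → g (r α) = g (s β)) :
    ∑ α, g (r α) = ∑ β, g (s β) := by
  choose φ hφ using hrs
  refine Finset.sum_bij_ne_zero (fun α _ _ => φ α) (fun _ _ _ => Finset.mem_univ _)
    (fun α _ _ α' _ _ h => hr α α' ?_) (fun β _ hβ => ?_) (fun α _ _ => hg α _ (hφ α))
  · exact Setoid.trans (hφ α) (h ▸ Setoid.symm (hφ α'))
  · obtain ⟨α, hα⟩ := hsr β hβ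
    have hαβ : φ α = β := hs _ _ (Setoid.trans (Setoid.symm (hφ α)) (Setoid.symm hα))
    exact ⟨α, Finset.mem_univ _, by rwa [hg α _ (hφ α), hαβ], hαβ⟩

@[ext]
theorem Emb.ext {X Y : Struc σ} {f g : Emb X Y} (h : f.toFun = g.toFun) : f = g := by
  cases f; cases g; cases h; rfl

instance Emb.finite (X Y : Struc σ) : Finite (Emb X Y) :=
  Finite.of_injective Emb.toFun fun _ _ => Emb.ext

theorem Emb.IsIso.comp {X Y Z : Struc σ} {g : Emb Y Z} {f : Emb X Y} (hg : g.IsIso)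
    (hf : f.IsIso) : (g.comp f).IsIso :=
  show Function.Surjective (g.toFun ∘ f.toFun) from Function.Surjective.comp hg hf

theorem Emb.IsIso.exists_inv {X Y : Struc σ} {f : Emb X Y} (hf : f.IsIso) :
    ∃ g : Emb Y X, g.IsIso ∧ ∀ x, g.toFun (f.toFun x) = x := by
  let e := Equiv.ofBijective f.toFun ⟨f.inj, hf⟩
  have he : ∀ y, f.toFun (e.symm y) = y := e.apply_symm_apply
  refine ⟨⟨e.symm, e.symm.injective, fun i v => ?_⟩, e.symm.surjective, e.symm_apply_apply⟩
  simpa only [he] using (f.rel_iff i fun j => e.symm (v j)).symm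

theorem StrucIso.symm {X Y : Struc σ} (h : StrucIso X Y) : StrucIso Y X :=
  let ⟨_, hf⟩ := h
  let ⟨g, hg, _⟩ := hf.exists_inv
  ⟨g, hg⟩

theorem StrucIso.trans {X Y Z : Struc σ} (h : StrucIso X Y) (h' : StrucIso Y Z) :
    StrucIso X Z :=
  let ⟨f, hf⟩ := h
  let ⟨g, hg⟩ := h'
  ⟨g.comp f, hg.comp hf⟩

theorem StrucIso.card_eq {X Y : Struc σ} (h : StrucIso X Y) :
    Nat.card X.carrier = Nat.card Y.carrier :=
  let ⟨f, hf⟩ := h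
  Nat.card_eq_of_bijective f.toFun ⟨f.inj, hf⟩

def Emb.ofIsEmpty (W X : Struc σ) [IsEmpty W.carrier] : Emb W X where
  toFun := isEmptyElim
  inj w := isEmptyElim w
  rel_iff i v := isEmptyElim (v ⟨0, σ.arity_pos i⟩)

instance Emb.subsingleton_of_isEmpty (W X : Struc σ) [IsEmpty W.carrier] :
    Subsingleton (Emb W X) :=
  ⟨fun _ _ => Emb.ext (funext isEmptyElim)⟩

theorem Emb.isIso_of_isEmpty {X Y : Struc σ} [IsEmpty Y.carrier] (f : Emb X Y) : f.IsIso :=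
  isEmptyElim

section Amalgamation

variable {X Y₁ Y₂ : Struc σ} {i₁ : Emb X Y₁} {i₂ : Emb X Y₂}

theorem Amalg.Iso.refl (A : Amalg i₁ i₂) : A.Iso A :=
  ⟨Emb.id A.Z, fun z => ⟨z, rfl⟩, fun _ => rfl, fun _ => rfl⟩

theorem Amalg.Iso.symm {A B : Amalg i₁ i₂} (h : A.Iso B) : B.Iso A := by
  obtain ⟨f, hf, h₁, h₂⟩ := h
  obtain ⟨g, hg, hgf⟩ := hf.exists_inv
  exact ⟨g, hg, fun y => by rw [← h₁, hgf], fun y => by rw [← h₂, hgf]⟩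

theorem Amalg.Iso.trans {A B C : Amalg i₁ i₂} (h : A.Iso B) (h' : B.Iso C) : A.Iso C := by
  obtain ⟨f, hf, h₁, h₂⟩ := h
  obtain ⟨g, hg, h₁', h₂'⟩ := h'
  exact ⟨g.comp f, hg.comp hf, fun y => (congrArg g.toFun (h₁ y)).trans (h₁' y),
    fun y => (congrArg g.toFun (h₂ y)).trans (h₂' y)⟩

instance Amalg.setoid : Setoid (Amalg i₁ i₂) :=
  ⟨Amalg.Iso, ⟨Amalg.Iso.refl, Amalg.Iso.symm, Amalg.Iso.trans⟩⟩

theorem Amalg.card_le (A : Amalg i₁ i₂) :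
    Nat.card A.Z.carrier ≤ Nat.card Y₁.carrier + Nat.card Y₂.carrier := by
  rw [← Nat.card_sum]
  refine Nat.card_le_card_of_surjective (Sum.elim A.j₁.toFun A.j₂.toFun) fun z => ?_
  rcases A.surj z with ⟨y, hy⟩ | ⟨y, hy⟩
  exacts [⟨.inl y, hy⟩, ⟨.inr y, hy⟩]

def Amalg.ofEmbs (W : Struc σ)
    (p : {p : Emb Y₁ W × Emb Y₂ W // (∀ x, p.1.toFun (i₁.toFun x) = p.2.toFun (i₂.toFun x)) ∧
      ∀ z, z ∈ Set.range p.1.toFun ∪ Set.range p.2.toFun}) : Amalg i₁ i₂ :=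
  ⟨W, p.1.1, p.1.2, p.2.1, p.2.2⟩

theorem Amalg.exists_iso_ofEmbs (A : Amalg i₁ i₂) {W : Struc σ} {g : Emb A.Z W}
    (hg : g.IsIso) : ∃ p, A.Iso (Amalg.ofEmbs W p) := by
  refine ⟨⟨(g.comp A.j₁, g.comp A.j₂), fun x => congrArg g.toFun (A.comm x), fun z => ?_⟩,
    g, hg, fun _ => rfl, fun _ => rfl⟩
  obtain ⟨z, rfl⟩ := hg z
  rcases A.surj z with ⟨y, rfl⟩ | ⟨y, rfl⟩
  exacts [Or.inl ⟨y, rfl⟩, Or.inr ⟨y, rfl⟩]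

end Amalgamation

namespace IsFraisse

variable {F : Set (Struc σ)}

theorem exists_isEmpty (hF : IsFraisse F) : ∃ W ∈ F, IsEmpty W.carrier := by
  obtain ⟨X, hX⟩ := hF.nonempty
  obtain ⟨W, hW, g, hg⟩ := hF.hereditary X hX (X.restrict ∅) ⟨X.subEmb ∅⟩
  refine ⟨W, hW, ⟨fun w => ?_⟩⟩
  obtain ⟨⟨_, h⟩, -⟩ := hg w
  exact h

theorem exists_finite_reps_of_card_le (hF : IsFraisse F) (N : ℕ) :
    ∃ T : Set (Struc σ), T.Finite ∧ T ⊆ F ∧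
      ∀ X, MemUpIso F X → Nat.card X.carrier ≤ N → ∃ W ∈ T, StrucIso X W := by
  classical
  choose M R hR using hF.finClasses
  obtain ⟨X₀, hX₀⟩ := hF.nonempty
  -- the representatives `R n α` need not lie in `F`: swap each for an isomorphic member of `F`
  -- where there is one (the dummy `X₀` otherwise)
  let w : (Σ n : Fin (N + 1), Fin (M n)) → Struc σ := fun p =>
    if h : ∃ W ∈ F, StrucIso W (R p.1 p.2) then h.choose else X₀
  refine ⟨Set.range w, Set.finite_range w, ?_, ?_⟩
  · rintro _ ⟨p, rfl⟩
    dsimp only [w]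
    split_ifs with h
    exacts [h.choose_spec.1, hX₀]
  · rintro X ⟨V, hV, hXV⟩ hN
    obtain ⟨α, hVα⟩ := hR _ V hV rfl
    have h : ∃ W ∈ F, StrucIso W (R (Nat.card V.carrier) α) := ⟨V, hV, hVα⟩
    refine ⟨w ⟨⟨Nat.card V.carrier, by rw [← hXV.card_eq]; omega⟩, α⟩, Set.mem_range_self _, ?_⟩
    simp only [w, dif_pos h]
    exact hXV.trans (hVα.trans h.choose_spec.2.symm)

theorem exists_amalg_transversal (hF : IsFraisse F) {X Y₁ Y₂ : Struc σ} (i₁ : Emb X Y₁)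
    (i₂ : Emb X Y₂) :
    ∃ (m : ℕ) (r : Fin m → Amalg i₁ i₂), (∀ α, (r α).Z ∈ F) ∧
      (∀ A : Amalg i₁ i₂, MemUpIso F A.Z → ∃ α, A.Iso (r α)) ∧
      ∀ α β, (r α).Iso (r β) → α = β := by
  obtain ⟨T, hT, hTF, hT_cover⟩ :=
    hF.exists_finite_reps_of_card_le (Nat.card Y₁.carrier + Nat.card Y₂.carrier)
  have hC : (⋃ W ∈ T, Set.range (Amalg.ofEmbs (i₁ := i₁) (i₂ := i₂) W)).Finite :=
    hT.biUnion fun W _ => Set.finite_range _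
  obtain ⟨m, r, hrC, hr_cover, hr_irred⟩ := hC.exists_fin_transversal
  refine ⟨m, r, fun α => ?_, fun A hA => ?_, hr_irred⟩
  · obtain ⟨W, hW, p, hp⟩ := Set.mem_iUnion₂.mp (hrC α)
    rw [← hp]
    exact hTF hW
  · obtain ⟨W, hW, g, hg⟩ := hT_cover A.Z hA A.card_le
    obtain ⟨p, hp⟩ := A.exists_iso_ofEmbs hg
    obtain ⟨α, hα⟩ := hr_cover _ (Set.mem_biUnion hW ⟨p, rfl⟩)
    exact ⟨α, hp.trans hα⟩

end IsFraisse

namespace IsMeasure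

variable {F : Set (Struc σ)} {k : Type} [CommRing k] {μ : ∀ X Y : Struc σ, Emb X Y → k}
  (hμ : IsMeasure F μ)
include hμ

theorem map_isIso {X Y : Struc σ} (hX : X ∈ F) (hY : Y ∈ F) {f : Emb X Y} (hf : f.IsIso) :
    μ X Y f = 1 :=
  hμ.1 X Y hX hY f hf

theorem map_comp {X Y Z : Struc σ} (hX : X ∈ F) (hY : Y ∈ F) (hZ : Z ∈ F) (f : Emb X Y)
    (g : Emb Y Z) : μ X Z (g.comp f) = μ Y Z g * μ X Y f :=
  hμ.2.1 X Y Z hX hY hZ f g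

theorem map_eq_sum {X Y X' : Struc σ} (hX : X ∈ F) (hY : Y ∈ F) (hX' : X' ∈ F) (i : Emb X Y)
    (f : Emb X X') {m : ℕ} (r : Fin m → Amalg i f) (hrF : ∀ α, (r α).Z ∈ F)
    (hr_cover : ∀ A : Amalg i f, MemUpIso F A.Z → ∃ α, A.Iso (r α))
    (hr_irred : ∀ α β, (r α).Iso (r β) → α = β) :
    μ X Y i = ∑ α, μ X' (r α).Z (r α).j₂ :=
  hμ.2.2 X Y X' hX hY hX' i f m r hrF hr_cover hr_irred

theorem map_j₂_eq_of_iso {X Y₁ Y₂ : Struc σ} {i₁ : Emb X Y₁} {i₂ : Emb X Y₂}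
    {A B : Amalg i₁ i₂} (hY₂ : Y₂ ∈ F) (hA : A.Z ∈ F) (hB : B.Z ∈ F) (h : A.Iso B) :
    μ Y₂ A.Z A.j₂ = μ Y₂ B.Z B.j₂ := by
  obtain ⟨g, hg, -, hg₂⟩ := h
  rw [← Emb.ext (funext hg₂ : (g.comp A.j₂).toFun = B.j₂.toFun),
    hμ.map_comp hY₂ hA hB, hμ.map_isIso hA hB hg, one_mul]

theorem map_eq_mul_of_isEmpty {W X Y : Struc σ} [IsEmpty W.carrier] (hW : W ∈ F) (hX : X ∈ F)
    (hY : Y ∈ F) (e : Emb W X) (g : Emb X Y) (e' : Emb W Y) :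
    μ W Y e' = μ X Y g * μ W X e := by
  rw [Subsingleton.elim e' (g.comp e)]
  exact hμ.map_comp hW hX hY e g

theorem mem_posClass_of_emb {X Y : Struc σ} (hX : X ∈ F) (hY : Y ∈ PosClass F μ)
    (g : Emb X Y) : X ∈ PosClass F μ := by
  refine ⟨hX, fun W hW _ e he => hY.2 W hW ‹_› (g.comp e) ?_⟩
  rw [hμ.map_comp hW hX hY.1, he, mul_zero]

theorem isEmpty_mem_posClass [Nontrivial k] {W : Struc σ} [IsEmpty W.carrier] (hW : W ∈ F) :
    W ∈ PosClass F μ :=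
  ⟨hW, fun V hV _ e => by rw [hμ.map_isIso hV hW (Emb.isIso_of_isEmpty e)]; exact one_ne_zero⟩

theorem map_ne_zero_of_mem_posClass (hF : IsFraisse F) {X Y : Struc σ}
    (hX : X ∈ PosClass F μ) (hY : Y ∈ PosClass F μ) (g : Emb X Y) : μ X Y g ≠ 0 := by
  obtain ⟨W, hW, hWe⟩ := hF.exists_isEmpty
  intro h
  apply hY.2 W hW hWe (g.comp (Emb.ofIsEmpty W X))
  rw [hμ.map_comp hW hX.1 hY.1, h, zero_mul]

theorem mem_posClass_of_map_ne_zero [NoZeroDivisors k] {Y Z : Struc σ}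
    (hY : Y ∈ PosClass F μ) (hZ : Z ∈ F) (g : Emb Y Z) (hg : μ Y Z g ≠ 0) :
    Z ∈ PosClass F μ := by
  refine ⟨hZ, fun W hW _ e => ?_⟩
  rw [hμ.map_eq_mul_of_isEmpty hW hY.1 hZ (Emb.ofIsEmpty W Y) g e]
  exact mul_ne_zero hg (hY.2 W hW ‹_› _)

theorem isFraisse_posClass [IsDomain k] (hF : IsFraisse F) : IsFraisse (PosClass F μ) where
  nonempty := by
    obtain ⟨W, hW, _⟩ := hF.exists_isEmpty
    exact ⟨W, hμ.isEmpty_mem_posClass hW⟩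
  finClasses n := by
    obtain ⟨m, r, hr⟩ := hF.finClasses n
    exact ⟨m, r, fun X hX => hr X hX.1⟩
  hereditary X hX Y hY := by
    obtain ⟨W, hW, hYW⟩ := hF.hereditary X hX.1 Y hY
    obtain ⟨g, -⟩ := hYW.symm
    exact ⟨W, hμ.mem_posClass_of_emb hW hX (hY.some.comp g), hYW⟩
  amalg X Y₁ Y₂ hX hY₁ hY₂ i₁ i₂ := by
    obtain ⟨m, r, hrF, hr_cover, hr_irred⟩ := hF.exists_amalg_transversal i₁ i₂
    have hsum := hμ.map_eq_sum hX.1 hY₁.1 hY₂.1 i₁ i₂ r hrF hr_cover hr_irred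
    obtain ⟨α, -, hα⟩ := Finset.exists_ne_zero_of_sum_ne_zero
      (hsum ▸ hμ.map_ne_zero_of_mem_posClass hF hX hY₁ i₁)
    exact ⟨r α, memUpIso_of_mem (hμ.mem_posClass_of_map_ne_zero hY₂ (hrF α) _ hα)⟩

theorem isMeasure_posClass [NoZeroDivisors k] (hF : IsFraisse F) :
    IsMeasure (PosClass F μ) μ := by
  refine ⟨fun X Y hX hY => hμ.1 X Y hX.1 hY.1,
    fun X Y Z hX hY hZ => hμ.2.1 X Y Z hX.1 hY.1 hZ.1, ?_⟩
  intro X Y X' hX hY hX' i f m r hrF hr_cover hr_irred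
  obtain ⟨M, s, hsF, hs_cover, hs_irred⟩ := hF.exists_amalg_transversal i f
  rw [hμ.map_eq_sum hX.1 hY.1 hX'.1 i f s hsF hs_cover hs_irred]
  -- amalgams outside `PosClass F μ` contribute zero to the sum over `s`
  refine (Fintype.sum_eq_sum_of_transversals (fun A : Amalg i f => μ X' A.Z A.j₂) hr_irred hs_irred
    (fun α => hs_cover (r α) (memUpIso_of_mem (hrF α).1)) (fun β hβ => ?_)
    (fun α β h => hμ.map_j₂_eq_of_iso hX'.1 (hrF α).1 (hsF β) h)).symm
  exact hr_cover (s β) (memUpIso_of_mem (hμ.mem_posClass_of_map_ne_zero hX' (hsF β) _ hβ))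

end IsMeasure

/-- **Proposition 2.16**: let `𝔉` be a Fraïssé class, `k` an integral domain, `μ` a
measure for `𝔉` valued in `k`, and `𝔉'` the subclass of structures with nonzero measure.
Then (1) `𝔉'` is a Fraïssé class; (2) `μ` restricts to a measure for `𝔉'` all of whose
values (on embeddings between members of `𝔉'`) are nonzero; and (3) if `k` is a field,
all these values are units, i.e. the restricted measure is regular. -/
theorem induced_regular_measure {F : Set (Struc σ)} (hF : IsFraisse F)
    {k : Type} [CommRing k] [IsDomain k]
    (μ : ∀ X Y : Struc σ, Emb X Y → k) (hμ : IsMeasure F μ) :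
    IsFraisse (PosClass F μ) ∧
    IsMeasure (PosClass F μ) μ ∧
    (∀ X Y : Struc σ, X ∈ PosClass F μ → Y ∈ PosClass F μ →
      ∀ f : Emb X Y, μ X Y f ≠ 0) ∧
    (IsField k → ∀ X Y : Struc σ, X ∈ PosClass F μ → Y ∈ PosClass F μ →
      ∀ f : Emb X Y, IsUnit (μ X Y f)) := by
  refine ⟨hμ.isFraisse_posClass hF, hμ.isMeasure_posClass hF,
    fun _ _ => hμ.map_ne_zero_of_mem_posClass hF, fun hk X Y hX hY f => ?_⟩
  obtain ⟨b, hb⟩ := hk.mul_inv_cancel (hμ.map_ne_zero_of_mem_posClass hF hX hY f)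
  exact .of_mul_eq_one b hb

end Paper
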